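/- arXiv:1901.10375 — 3 statements merged into one kernel-verified Lean document; each statement's English description precedes it below -/
import Mathlib

section
/- Let P be a probability generating function with mean m ∈ (0,1), analytic with radius r_P > 1, and let ψ_P > 1 be such that P(z) < z for all z ∈ (1, ψ_P). If G is a power series with nonnegative coefficients, G(0)=0, G(1)=1, satisfying G(P(z)) = m G(z) + 1 - m on the unit disc, and G has radius of convergence r_G > 1, then r_G ≥ ψ_P. -/
/-!
Suppose `r_G < ψ_P`. Since `P(r_G) < r_G` and `P` is continuous on its disc of convergence,
some `t > r_G` has `P(t) < r_G`, so `G(P(t))` converges. Expanded as a power series in `t`,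
`G ∘ P` has nonnegative coefficients `c_n`; on `(0, 1)` the Schröder equation says
`∑ c_n tⁿ = m G(t) + 1 - m`, and the identity theorem gives `c_n = m g_n + (1 - m) [n = 0]`.
Hence `m G(t) ≤ G(P(t)) < ∞`, i.e. `G` converges at `t > r_G`: a contradiction.
-/

open scoped ENNReal
open Set Finset PowerSeries FormalMultilinearSeries

theorem ENNReal.tsum_mul_tsum_eq_tsum_sum_antidiagonal (f g : ℕ → ℝ≥0∞) :
    (∑' n, f n) * ∑' n, g n = ∑' n, ∑ kl ∈ antidiagonal n, f kl.1 * g kl.2 := by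
  rw [← ENNReal.tsum_mul_right]
  simp_rw [← ENNReal.tsum_mul_left]
  rw [← ENNReal.tsum_prod, ← HasAntidiagonal.sigmaAntidiagonalEquivProd.tsum_eq,
    ENNReal.tsum_sigma']
  simp only [HasAntidiagonal.sigmaAntidiagonalEquivProd_apply]
  exact tsum_congr fun n => Finset.tsum_subtype _ fun kl : ℕ × ℕ => f kl.1 * g kl.2

section ENNRealPowerSeries

variable (t : ℝ≥0∞)

theorem ENNReal.tsum_coeff_mul_mul_pow (f g : ℝ≥0∞⟦X⟧) :
    ∑' n, coeff n (f * g) * t ^ n = (∑' n, coeff n f * t ^ n) * ∑' n, coeff n g * t ^ n := by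
  rw [ENNReal.tsum_mul_tsum_eq_tsum_sum_antidiagonal]
  refine tsum_congr fun n => ?_
  rw [coeff_mul, sum_mul]
  refine sum_congr rfl fun k hk => ?_
  rw [← mem_antidiagonal.mp hk, pow_add]
  ring

theorem ENNReal.tsum_coeff_pow_mul_pow (f : ℝ≥0∞⟦X⟧) (j : ℕ) :
    ∑' n, coeff n (f ^ j) * t ^ n = (∑' n, coeff n f * t ^ n) ^ j := by
  induction j with
  | zero => simp [coeff_one, ite_mul]
  | succ j ih => rw [pow_succ, ENNReal.tsum_coeff_mul_mul_pow, ih, pow_succ]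

theorem ENNReal.tsum_tsum_mul_coeff_pow_mul_pow (g : ℕ → ℝ≥0∞) (f : ℝ≥0∞⟦X⟧) :
    ∑' n, (∑' j, g j * coeff n (f ^ j)) * t ^ n = ∑' j, g j * (∑' n, coeff n f * t ^ n) ^ j := by
  simp_rw [← ENNReal.tsum_coeff_pow_mul_pow, ← ENNReal.tsum_mul_left, ← ENNReal.tsum_mul_right,
    mul_assoc]
  exact ENNReal.tsum_comm

end ENNRealPowerSeries

theorem ENNReal.tsum_ofReal_mul_pow {a : ℕ → ℝ} (ha : ∀ n, 0 ≤ a n) {t : ℝ} (ht : 0 ≤ t)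
    (h : Summable fun n => a n * t ^ n) :
    ∑' n, ENNReal.ofReal (a n) * ENNReal.ofReal t ^ n = ENNReal.ofReal (∑' n, a n * t ^ n) := by
  rw [ENNReal.ofReal_tsum_of_nonneg (fun n => mul_nonneg (ha n) (pow_nonneg ht n)) h]
  simp_rw [ENNReal.ofReal_mul (ha _), ENNReal.ofReal_pow ht]

theorem ENNReal.hasSum_toReal_mul_pow {c : ℕ → ℝ≥0∞} {t : ℝ} (ht : 0 ≤ t)
    (h : ∑' n, c n * ENNReal.ofReal t ^ n ≠ ∞) :
    HasSum (fun n => (c n).toReal * t ^ n) (∑' n, c n * ENNReal.ofReal t ^ n).toReal := by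
  rw [ENNReal.tsum_toReal_eq (ENNReal.ne_top_of_tsum_ne_top h)]
  simpa [ENNReal.toReal_mul, ht] using ENNReal.hasSum_toReal h

theorem summable_mul_pow_of_le {a : ℕ → ℝ} (ha : ∀ n, 0 ≤ a n) {s t : ℝ} (hs : 0 ≤ s)
    (hst : s ≤ t) (h : Summable fun n => a n * t ^ n) : Summable fun n => a n * s ^ n :=
  h.of_nonneg_of_le (fun n => mul_nonneg (ha n) (pow_nonneg hs n))
    fun n => mul_le_mul_of_nonneg_left (pow_le_pow_left₀ hs hst n) (ha n)

theorem hasFPowerSeriesOnBall_tsum_mul_pow {a : ℕ → ℝ} {r : ℝ} (hr : 0 < r)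
    (h : Summable fun n => a n * r ^ n) :
    HasFPowerSeriesOnBall (fun t => ∑' n, a n * t ^ n) (ofScalars ℝ a) 0 (ENNReal.ofReal r) := by
  have hrad : ENNReal.ofReal r ≤ (ofScalars ℝ a).radius := by
    refine (ofScalars ℝ a).le_radius_of_tendsto (l := 0) ?_
    simpa [ofScalars_norm, hr.le, abs_of_pos hr] using h.tendsto_atTop_zero.norm
  convert ((ofScalars ℝ a).hasFPowerSeriesOnBall
    ((ENNReal.ofReal_pos.mpr hr).trans_le hrad)).mono (ENNReal.ofReal_pos.mpr hr) hrad using 1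
  ext t
  simp [FormalMultilinearSeries.sum, mul_comm]

theorem eq_of_tsum_mul_pow_eqOn_Ioo {a b : ℕ → ℝ} {r : ℝ} (hr : 0 < r)
    (ha : Summable fun n => a n * r ^ n) (hb : Summable fun n => b n * r ^ n)
    (h : EqOn (fun t => ∑' n, a n * t ^ n) (fun t => ∑' n, b n * t ^ n) (Ioo 0 r)) : a = b := by
  have ha' := (hasFPowerSeriesOnBall_tsum_mul_pow hr ha).hasFPowerSeriesAt
  have hb' := (hasFPowerSeriesOnBall_tsum_mul_pow hr hb).hasFPowerSeriesAt
  rcases ha'.analyticAt.eventually_eq_or_eventually_ne hb'.analyticAt with heq | hne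
  · exact ofScalars_series_injective ℝ (E := ℝ)
      (ha'.eq_formalMultilinearSeries_of_eventually hb' heq)
  · obtain ⟨t, hne, ht⟩ := ((hne.filter_mono (nhdsGT_le_nhdsNE 0)).and (Ioo_mem_nhdsGT hr)).exists
    exact absurd (h ht) hne

theorem hasSum_schroeder_mul_pow {g : ℕ → ℝ} {m t G : ℝ} (h : HasSum (fun n => g n * t ^ n) G) :
    HasSum (fun n => (m * g n + if n = 0 then 1 - m else 0) * t ^ n) (m * G + 1 - m) := by
  rw [add_sub_assoc]
  refine ((h.mul_left m).add (hasSum_ite_eq 0 (1 - m))).congr_fun fun n => ?_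
  split_ifs with hn <;> simp [hn, mul_assoc]

/-- The coefficients of the composite series `G ∘ P`, computed in `ℝ≥0∞` so that every
rearrangement of the double series is legitimate. -/
noncomputable def compCoeff (p g : ℕ → ℝ) (n : ℕ) : ℝ≥0∞ :=
  ∑' j, ENNReal.ofReal (g j) * coeff n (PowerSeries.mk (fun i => ENNReal.ofReal (p i)) ^ j)

section Schroeder

variable {p g : ℕ → ℝ} (hp : ∀ i, 0 ≤ p i) (hg : ∀ j, 0 ≤ g j)
include hp hg

theorem tsum_compCoeff_mul_pow {t : ℝ} (ht : 0 ≤ t) (hPt : Summable fun i => p i * t ^ i)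
    (hGPt : Summable fun j => g j * (∑' i, p i * t ^ i) ^ j) :
    ∑' n, compCoeff p g n * ENNReal.ofReal t ^ n
      = ENNReal.ofReal (∑' j, g j * (∑' i, p i * t ^ i) ^ j) := by
  simp only [compCoeff]
  rw [ENNReal.tsum_tsum_mul_coeff_pow_mul_pow]
  simp only [coeff_mk]
  rw [ENNReal.tsum_ofReal_mul_pow hp ht hPt,
    ENNReal.tsum_ofReal_mul_pow hg (tsum_nonneg fun i => mul_nonneg (hp i) (pow_nonneg ht i)) hGPt]

theorem tsum_compCoeff_mul_pow_of_mem_Ioo (hS : Summable p) (hsum : ∑' i, p i = 1)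
    (hgS : Summable g) {t : ℝ} (ht : t ∈ Ioo (0 : ℝ) 1) :
    ∑' n, compCoeff p g n * ENNReal.ofReal t ^ n
      = ENNReal.ofReal (∑' j, g j * (∑' i, p i * t ^ i) ^ j) := by
  obtain ⟨ht0, ht1⟩ := ht
  have hPt : Summable fun i => p i * t ^ i :=
    summable_mul_pow_of_le hp ht0.le ht1.le (by simpa using hS)
  have hPt0 : 0 ≤ ∑' i, p i * t ^ i :=
    tsum_nonneg fun i => mul_nonneg (hp i) (pow_nonneg ht0.le i)
  have hPt1 : ∑' i, p i * t ^ i ≤ 1 := hsum ▸ hPt.tsum_le_tsum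
    (fun i => mul_le_of_le_one_right (hp i) (pow_le_one₀ ht0.le ht1.le)) hS
  exact tsum_compCoeff_mul_pow hp hg ht0.le hPt
    (summable_mul_pow_of_le hg hPt0 hPt1 (by simpa using hgS))

theorem compCoeff_eq_of_schroeder {m : ℝ} (hS : Summable p) (hsum : ∑' i, p i = 1)
    (hgS : Summable g)
    (heq : ∀ t ∈ Ioo (0 : ℝ) 1,
      ∑' j, g j * (∑' i, p i * t ^ i) ^ j = m * ∑' j, g j * t ^ j + 1 - m) (n : ℕ) :
    compCoeff p g n = ENNReal.ofReal (m * g n + if n = 0 then 1 - m else 0) := by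
  have hcomp := fun t (ht : t ∈ Ioo (0 : ℝ) 1) =>
    tsum_compCoeff_mul_pow_of_mem_Ioo hp hg hS hsum hgS ht
  have ha : ∀ t ∈ Ioo (0 : ℝ) 1, HasSum (fun n => (compCoeff p g n).toReal * t ^ n)
      (m * ∑' j, g j * t ^ j + 1 - m) := by
    intro t ht
    have hGP0 : 0 ≤ ∑' j, g j * (∑' i, p i * t ^ i) ^ j := tsum_nonneg fun j => mul_nonneg (hg j)
      (pow_nonneg (tsum_nonneg fun i => mul_nonneg (hp i) (pow_nonneg ht.1.le i)) j)
    have h := ENNReal.hasSum_toReal_mul_pow ht.1.le ((hcomp t ht).symm ▸ ENNReal.ofReal_ne_top)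
    rwa [hcomp t ht, ENNReal.toReal_ofReal hGP0, heq t ht] at h
  have hb : ∀ t ∈ Ioo (0 : ℝ) 1, HasSum (fun n => (m * g n + if n = 0 then 1 - m else 0) * t ^ n)
      (m * ∑' j, g j * t ^ j + 1 - m) := fun t ht =>
    hasSum_schroeder_mul_pow (summable_mul_pow_of_le hg ht.1.le ht.2.le (by simpa using hgS)).hasSum
  have half_mem : (2⁻¹ : ℝ) ∈ Ioo (0 : ℝ) 1 := ⟨by norm_num, by norm_num⟩
  have hab := eq_of_tsum_mul_pow_eqOn_Ioo (by norm_num) (ha _ half_mem).summable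
    (hb _ half_mem).summable fun t ht =>
      have ht' : t ∈ Ioo (0 : ℝ) 1 := ⟨ht.1, ht.2.trans half_mem.2⟩
      (ha t ht').tsum_eq.trans (hb t ht').tsum_eq.symm
  have hfin : ∑' n, compCoeff p g n * ENNReal.ofReal 2⁻¹ ^ n ≠ ∞ :=
    (hcomp _ half_mem).symm ▸ ENNReal.ofReal_ne_top
  have hn : compCoeff p g n ≠ ∞ := fun htop =>
    ENNReal.ne_top_of_tsum_ne_top hfin n (by rw [htop, ENNReal.top_mul (by simp)])
  rw [← congrFun hab n, ENNReal.ofReal_toReal hn]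

theorem summable_of_summable_comp_of_schroeder {m : ℝ} (hm0 : 0 < m) (hm1 : m ≤ 1)
    (hS : Summable p) (hsum : ∑' i, p i = 1) (hgS : Summable g)
    (heq : ∀ t ∈ Ioo (0 : ℝ) 1,
      ∑' j, g j * (∑' i, p i * t ^ i) ^ j = m * ∑' j, g j * t ^ j + 1 - m)
    {t : ℝ} (ht : 0 ≤ t) (hPt : Summable fun i => p i * t ^ i)
    (hGPt : Summable fun j => g j * (∑' i, p i * t ^ i) ^ j) :
    Summable fun j => g j * t ^ j := by
  have hle : ENNReal.ofReal m * ∑' n, ENNReal.ofReal (g n) * ENNReal.ofReal t ^ n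
      ≤ ∑' n, compCoeff p g n * ENNReal.ofReal t ^ n := by
    rw [← ENNReal.tsum_mul_left]
    refine ENNReal.tsum_le_tsum fun n => ?_
    rw [compCoeff_eq_of_schroeder hp hg hS hsum hgS heq n, ← mul_assoc,
      ← ENNReal.ofReal_mul hm0.le]
    gcongr
    split_ifs <;> linarith
  rw [tsum_compCoeff_mul_pow hp hg ht hPt hGPt] at hle
  have hfin : ∑' n, ENNReal.ofReal (g n) * ENNReal.ofReal t ^ n ≠ ∞ := fun htop => by
    rw [htop, ENNReal.mul_top (by simpa using hm0)] at hle
    exact ENNReal.ofReal_ne_top (top_le_iff.mp hle)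
  simpa [hg] using (ENNReal.hasSum_toReal_mul_pow ht hfin).summable

end Schroeder

theorem Complex.ofReal_tsum_mul_pow (a : ℕ → ℝ) (x : ℝ) :
    ((∑' n, a n * x ^ n : ℝ) : ℂ) = ∑' n, (a n : ℂ) * (x : ℂ) ^ n := by
  push_cast [Complex.ofReal_tsum]
  rfl

theorem stmt_6_general (p : ℕ → ℝ) (hp : ∀ j, 0 ≤ p j) (hS : Summable p) (hsum : ∑' j, p j = 1)
    (m : ℝ) (hm0 : 0 < m) (hm1 : m < 1)
    (ψP : ℝ)
    (hPlt : ∀ x : ℝ, 1 < x → x < ψP → Summable (fun j => p j * x ^ j) ∧ (∑' j, p j * x ^ j) < x)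
    (g : ℕ → ℝ) (hg : ∀ j, 0 ≤ g j)
    (heq : ∀ z : ℂ, ‖z‖ ≤ 1 →
      (∑' j : ℕ, (g j : ℂ) * (∑' i : ℕ, (p i : ℂ) * z ^ i) ^ j) =
        (m : ℂ) * (∑' j : ℕ, (g j : ℂ) * z ^ j) + 1 - (m : ℂ))
    (rG : ℝ) (hrG : 1 < rG)
    (hradius₁ : ∀ r : ℝ, 0 < r → r < rG → Summable (fun j => g j * r ^ j))
    (hradius₂ : ∀ r : ℝ, rG < r → ¬ Summable (fun j => g j * r ^ j)) :
    ψP ≤ rG := by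
  have hgS : Summable g := by simpa using hradius₁ 1 one_pos hrG
  have hreal : ∀ t ∈ Ioo (0 : ℝ) 1,
      ∑' j, g j * (∑' i, p i * t ^ i) ^ j = m * ∑' j, g j * t ^ j + 1 - m := by
    intro t ht
    have h := heq t (by simpa [abs_of_pos ht.1] using ht.2.le)
    rw [← Complex.ofReal_tsum_mul_pow, ← Complex.ofReal_tsum_mul_pow,
      ← Complex.ofReal_tsum_mul_pow] at h
    exact_mod_cast h
  by_contra! hlt
  obtain ⟨x, hrGx, hxψ⟩ := exists_between hlt
  have hPx := (hPlt x (hrG.trans hrGx) hxψ).1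
  have hcont : ContinuousAt (fun t => ∑' i, p i * t ^ i) rG :=
    (hasFPowerSeriesOnBall_tsum_mul_pow (by linarith) hPx).continuousOn.continuousAt
      (Metric.isOpen_eball.mem_nhds (by simpa [abs_of_pos (zero_lt_one.trans hrG)] using hrGx))
  obtain ⟨t, htP, hrGt, htx⟩ : ∃ t, ∑' i, p i * t ^ i < rG ∧ t ∈ Ioo rG x :=
    (((hcont.eventually (gt_mem_nhds (hPlt rG hrG hlt).2)).filter_mono nhdsWithin_le_nhds).and
      (Ioo_mem_nhdsGT hrGx)).exists
  have hPt := summable_mul_pow_of_le hp (by linarith) htx.le hPx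
  have hPt1 : 1 ≤ ∑' i, p i * t ^ i := hsum ▸ hS.tsum_le_tsum
    (fun i => le_mul_of_one_le_right (hp i) (one_le_pow₀ (by linarith))) hPt
  exact hradius₂ t hrGt (summable_of_summable_comp_of_schroeder hp hg hm0 hm1.le hS hsum hgS hreal
    (by linarith) hPt (hradius₁ _ (by linarith) htP))

/-- If `G` (power series with nonnegative coefficients, `G(0)=0`, `G(1)=1`) satisfies the
Schröder equation `G(P(z)) = m G(z) + 1 - m` on the unit disc, has radius of convergence
`r_G > 1`, and `P(x) < x` on `(1, ψ_P)`, then `r_G ≥ ψ_P`. -/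
theorem stmt_6 (p : ℕ → ℝ) (hp : ∀ j, 0 ≤ p j) (hS : Summable p) (hsum : ∑' j, p j = 1)
    (m : ℝ) (hm : m = ∑' j : ℕ, (j : ℝ) * p j) (hm0 : 0 < m) (hm1 : m < 1)
    (ψP : ℝ) (hψ : 1 < ψP)
    (hPlt : ∀ x : ℝ, 1 < x → x < ψP → Summable (fun j => p j * x ^ j) ∧ (∑' j, p j * x ^ j) < x)
    (g : ℕ → ℝ) (hg : ∀ j, 0 ≤ g j) (hg0 : g 0 = 0) (hg1 : ∑' j, g j = 1)
    (heq : ∀ z : ℂ, ‖z‖ ≤ 1 →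
      (∑' j : ℕ, (g j : ℂ) * (∑' i : ℕ, (p i : ℂ) * z ^ i) ^ j) =
        (m : ℂ) * (∑' j : ℕ, (g j : ℂ) * z ^ j) + 1 - (m : ℂ))
    (rG : ℝ) (hrG : 1 < rG)
    (hradius₁ : ∀ r : ℝ, 0 < r → r < rG → Summable (fun j => g j * r ^ j))
    (hradius₂ : ∀ r : ℝ, rG < r → ¬ Summable (fun j => g j * r ^ j)) :
    ψP ≤ rG :=
  stmt_6_general p hp hS hsum m hm0 hm1 ψP hPlt g hg heq rG hrG hradius₁ hradius₂
end

section
/- For h > 1: if P and G are h-times differentiable at 1 (from the left) with P'(1) = m ∈ (0,1), G'(1) > 0, and they satisfy the Faà di Bruno relation (m - m^h) G^{(h)}(1) = Σ_{j=1}^{h-1} G^{(j)}(1) B_{h,j}(P'(1),…,P^{(h-j+1)}(1)), then G^{(h)}(1) is finite if and only if P^{(h)}(1) is finite, by induction on h. -/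
/-!
Since `0 < m - m ^ h < ∞`, the relation makes `G^{(h)}(1)` finite exactly when its right-hand
side is. The `j = 1` term is at least `G'(1) · P^{(h)}(1)`, because `B_{h,1}` contains the
one-block partition, so finiteness forces `P^{(h)}(1) < ∞` as `G'(1) > 0`. Conversely, the
Bell polynomials `B_{h,j}` only involve `P^{(i)}(1)` for `i ≤ h`, which are finite once
`P^{(h)}(1)` is, and `G^{(j)}(1)` for `j < h` is finite by strong induction on `h`.
-/

open scoped ENNReal

/-- Partial Bell polynomial with values in `ℝ≥0∞` (to accommodate possibly infinite
factorial moments). -/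
noncomputable def partialBellE (h j : ℕ) (x : ℕ → ℝ≥0∞) : ℝ≥0∞ :=
  ∑ f : Fin h → Fin (h + 1),
    if (∑ s, (f s : ℕ)) = j ∧ (∑ s : Fin h, (s.1 + 1) * (f s : ℕ)) = h then
      ((h.factorial : ℝ≥0∞) / (∏ s, ((f s : ℕ).factorial : ℝ≥0∞))) *
        ∏ s : Fin h, (x (s.1 + 1) / ((s.1 + 1).factorial : ℝ≥0∞)) ^ (f s : ℕ)
    else 0

/-- `h`-th factorial moment `∑_{j≥h} j!/(j-h)! a_j` of a nonnegative sequence,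
valued in `ℝ≥0∞`. -/
noncomputable def factMoment (a : ℕ → ℝ) (h : ℕ) : ℝ≥0∞ :=
  ∑' j : ℕ, (j.descFactorial h : ℝ≥0∞) * ENNReal.ofReal (a j)

lemma Nat.descFactorial_le_descFactorial_of_le {n k h : ℕ} (hkh : k ≤ h) (hhn : h ≤ n) :
    n.descFactorial k ≤ n.descFactorial h := by
  rw [← Nat.descFactorial_mul_descFactorial hkh]
  exact Nat.le_mul_of_pos_left _ (Nat.descFactorial_pos.2 (by omega))

lemma factMoment_lt_top_of_le {a : ℕ → ℝ} {k h : ℕ} (hkh : k ≤ h)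
    (hfin : factMoment a h < ⊤) : factMoment a k < ⊤ := by
  set f : ℕ → ℕ → ℝ≥0∞ := fun i j => (j.descFactorial i : ℝ≥0∞) * ENNReal.ofReal (a j)
  have tail_le : ∑' j, f k (j + h) ≤ factMoment a h := calc
    ∑' j, f k (j + h) ≤ ∑' j, f h (j + h) := ENNReal.tsum_le_tsum fun j => by
        simp only [f]
        gcongr
        exact Nat.descFactorial_le_descFactorial_of_le hkh (by omega)
    _ ≤ factMoment a h := ENNReal.tsum_comp_le_tsum_of_injective (add_left_injective h) _
  rw [factMoment, ← ENNReal.summable.sum_add_tsum_nat_add' (k := h)]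
  refine ENNReal.add_lt_top.2 ⟨?_, tail_le.trans_lt hfin⟩
  exact ENNReal.sum_lt_top.2 fun j _ =>
    ENNReal.mul_lt_top (ENNReal.natCast_lt_top _) ENNReal.ofReal_lt_top

lemma le_partialBellE_one (n : ℕ) (x : ℕ → ℝ≥0∞) : x (n + 1) ≤ partialBellE (n + 1) 1 x := by
  classical
  -- `f s` counts the blocks of size `s + 1`; `f₀` is the partition into a single block.
  set f₀ : Fin (n + 1) → Fin (n + 2) := Pi.single (Fin.last n) 1
  refine le_trans (le_of_eq ?_) (Finset.single_le_sum (fun _ _ => zero_le) (Finset.mem_univ f₀))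
  simp [f₀, Fin.sum_univ_castSucc, Fin.prod_univ_castSucc]
  exact (ENNReal.mul_div_cancel (by simp [Nat.factorial_ne_zero]) (ENNReal.natCast_ne_top _)).symm

lemma partialBellE_lt_top {h j : ℕ} {x : ℕ → ℝ≥0∞} (hx : ∀ i ≤ h, x i < ⊤) :
    partialBellE h j x < ⊤ := by
  refine ENNReal.sum_lt_top.2 fun f _ => ?_
  split_ifs with hf
  · have hpart : ∀ s, (f s : ℕ) ≠ 0 → s.1 + 1 ≤ h := fun s hs =>
      calc s.1 + 1 ≤ (s.1 + 1) * (f s : ℕ) := Nat.le_mul_of_pos_right _ (Nat.pos_of_ne_zero hs)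
        _ ≤ ∑ t, (t.1 + 1) * (f t : ℕ) :=
          Finset.single_le_sum (f := fun t => (t.1 + 1) * (f t : ℕ)) (fun _ _ => Nat.zero_le _)
            (Finset.mem_univ s)
        _ = h := hf.2
    refine ENNReal.mul_lt_top (ENNReal.div_lt_top (ENNReal.natCast_ne_top _) ?_)
      (ENNReal.prod_lt_top fun s _ => ?_)
    · simp [Finset.prod_eq_zero_iff, Nat.factorial_ne_zero]
    · by_cases hs : (f s : ℕ) = 0
      · simp [hs]
      · exact ENNReal.pow_lt_top
          (ENNReal.div_lt_top (hx _ (hpart s hs)).ne (by simp [Nat.factorial_ne_zero]))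
  · exact ENNReal.zero_lt_top

lemma lt_top_of_sum_mul_partialBellE_lt_top {y x : ℕ → ℝ≥0∞} {h : ℕ} (hh : 1 < h)
    (hy : y 1 ≠ 0) (hsum : ∑ j ∈ Finset.Icc 1 (h - 1), y j * partialBellE h j x < ⊤) :
    x h < ⊤ := by
  obtain ⟨n, rfl⟩ : ∃ n, h = n + 1 := ⟨h - 1, by omega⟩
  have hterm : y 1 * partialBellE (n + 1) 1 x < ⊤ :=
    (Finset.single_le_sum (f := fun j => y j * partialBellE (n + 1) j x) (fun _ _ => zero_le)
      (by simp; omega)).trans_lt hsum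
  exact (le_partialBellE_one n x).trans_lt (ENNReal.lt_top_of_mul_ne_top_right hterm.ne hy)

theorem stmt_9_general (p g : ℕ → ℝ)
    (m : ℝ) (hm0 : 0 < m) (hm1 : m < 1)
    (hG1fin : factMoment g 1 < ⊤) (hG1pos : 0 < factMoment g 1)
    (hrel : ∀ h : ℕ, 1 < h →
      ENNReal.ofReal (m - m ^ h) * factMoment g h =
        ∑ j ∈ Finset.Icc 1 (h - 1),
          factMoment g j * partialBellE h j (fun s => factMoment p s)) :
    ∀ h : ℕ, 1 < h → (factMoment g h < ⊤ ↔ factMoment p h < ⊤) := by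
  intro h
  induction h using Nat.strong_induction_on with
  | _ h IH =>
  intro hh
  have hc : ENNReal.ofReal (m - m ^ h) ≠ 0 :=
    (ENNReal.ofReal_pos.2 (sub_pos.2 (pow_lt_self_of_lt_one₀ hm0 hm1 hh))).ne'
  have hG : factMoment g h < ⊤ ↔ ∑ j ∈ Finset.Icc 1 (h - 1),
      factMoment g j * partialBellE h j (fun s => factMoment p s) < ⊤ := by
    simp [← hrel h hh, lt_top_iff_ne_top, ENNReal.mul_eq_top, hc]
  refine hG.trans ⟨lt_top_of_sum_mul_partialBellE_lt_top hh hG1pos.ne', fun hP => ?_⟩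
  refine ENNReal.sum_lt_top.2 fun j hj => ENNReal.mul_lt_top ?_
    (partialBellE_lt_top fun i hi => factMoment_lt_top_of_le hi hP)
  obtain ⟨hj1, hjh⟩ := Finset.mem_Icc.1 hj
  rcases hj1.eq_or_lt with rfl | hj1
  · exact hG1fin
  · exact (IH j (by omega) hj1).2 (factMoment_lt_top_of_le (by omega) hP)

/-- If the quasi-stationary generating function `G` and the offspring generating function `P`
satisfy the Faà di Bruno relation
`(m - m^h) G^{(h)}(1) = ∑_{j=1}^{h-1} G^{(j)}(1) B_{h,j}(P'(1),…)` for every `h > 1`,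
with `P'(1) = m ∈ (0,1)` and `0 < G'(1) < ∞`, then `G^{(h)}(1)` is finite iff
`P^{(h)}(1)` is finite, for every `h > 1`. -/
theorem stmt_9 (p g : ℕ → ℝ) (hp : ∀ j, 0 ≤ p j) (hg : ∀ j, 0 ≤ g j)
    (m : ℝ) (hm0 : 0 < m) (hm1 : m < 1)
    (hPm : factMoment p 1 = ENNReal.ofReal m)
    (hG1fin : factMoment g 1 < ⊤) (hG1pos : 0 < factMoment g 1)
    (hrel : ∀ h : ℕ, 1 < h →
      ENNReal.ofReal (m - m ^ h) * factMoment g h =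
        ∑ j ∈ Finset.Icc 1 (h - 1),
          factMoment g j * partialBellE h j (fun s => factMoment p s)) :
    ∀ h : ℕ, 1 < h → (factMoment g h < ⊤ ↔ factMoment p h < ⊤) :=
  stmt_9_general p g m hm0 hm1 hG1fin hG1pos hrel
end

section
/- (Singular value bound for separated Cauchy matrices) Let x_1,…,x_m and y_1,…,y_n be complex numbers such that for some θ ∈ (0,1) and c ∈ ℂ, |y_j - c| ≤ θ |x_h - c| for all h, j, and let δ = min_h |c - x_h| > 0. Then for every k there exist matrices U ∈ ℂ^{m×k}, V ∈ ℂ^{n×k} such that the Cauchy matrix C with entries C_{hj} = 1/(x_h - y_j) satisfies ‖C - U V*‖₂ ≤ θ^k √(mn) / ((1-θ) δ). -/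
open scoped Matrix Matrix.Norms.L2Operator
open Finset

/-!
Expanding `1 / (x - y) = 1 / ((x - c) - (y - c))` as a geometric series in `(y - c) / (x - c)` and
truncating after `k` terms gives a rank-`k` matrix `U Vᴴ` with `U h i = (x_h - c)^{-(i+1)}` and
`Vᴴ i j = (y_j - c)^i`. The remainder entry is `((y_j - c) / (x_h - c))^k / (x_h - y_j)`, of modulus
at most `θ^k / ((1 - θ) δ)`, and an `m × n` matrix whose entries are bounded by `M` has spectral
norm at most `√(mn) M` (Cauchy–Schwarz row by row, i.e. the Frobenius bound).
-/

namespace Matrix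

variable {m n 𝕜 : Type*} [Fintype m] [Fintype n] [DecidableEq n] [RCLike 𝕜]

lemma l2_opNorm_le_sqrt_sum_sq (A : Matrix m n 𝕜) : ‖A‖ ≤ √(∑ i, ∑ j, ‖A i j‖ ^ 2) := by
  rw [l2_opNorm_def]
  refine ContinuousLinearMap.opNorm_le_bound _ (by positivity) fun v => ?_
  have row : ∀ i, ‖(A *ᵥ v.ofLp) i‖ ^ 2 ≤ (∑ j, ‖A i j‖ ^ 2) * ‖v‖ ^ 2 := fun i => calc
    ‖(A *ᵥ v.ofLp) i‖ ^ 2 ≤ (∑ j, ‖A i j‖ * ‖v j‖) ^ 2 := by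
      gcongr
      simpa only [mulVec, dotProduct, norm_mul] using norm_sum_le univ fun j => A i j * v j
    _ ≤ (∑ j, ‖A i j‖ ^ 2) * ‖v‖ ^ 2 := by
      rw [EuclideanSpace.norm_sq_eq]; exact sum_mul_sq_le_sq_mul_sq _ _ _
  refine le_of_sq_le_sq ?_ (by positivity)
  calc ‖_‖ ^ 2 = ∑ i, ‖(A *ᵥ v.ofLp) i‖ ^ 2 := by
        simp [EuclideanSpace.norm_sq_eq, toLpLin_apply]
    _ ≤ ∑ i, (∑ j, ‖A i j‖ ^ 2) * ‖v‖ ^ 2 := sum_le_sum fun i _ => row i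
    _ = (√(∑ i, ∑ j, ‖A i j‖ ^ 2) * ‖v‖) ^ 2 := by
      rw [mul_pow, Real.sq_sqrt (by positivity), sum_mul]

lemma l2_opNorm_le_of_forall_norm_le (A : Matrix m n 𝕜) {M : ℝ} (hM : 0 ≤ M)
    (h : ∀ i j, ‖A i j‖ ≤ M) : ‖A‖ ≤ √(Fintype.card m * Fintype.card n) * M := by
  refine A.l2_opNorm_le_sqrt_sum_sq.trans ?_
  calc √(∑ i, ∑ j, ‖A i j‖ ^ 2) ≤ √(∑ _i : m, ∑ _j : n, M ^ 2) := by
        gcongr with i _ j; exact h i j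
    _ = √(Fintype.card m * Fintype.card n) * M := by
      rw [← Real.sqrt_sq hM, ← Real.sqrt_mul (by positivity)]
      simp [mul_assoc]

end Matrix

section Taylor

variable {K : Type*} [Field K]

lemma inv_sub_eq_sum_add {x y c : K} (hxc : x - c ≠ 0) (hxy : x - y ≠ 0) (k : ℕ) :
    (x - y)⁻¹ =
      ∑ i ∈ range k, (y - c) ^ i / (x - c) ^ (i + 1) + ((y - c) / (x - c)) ^ k / (x - y) := by
  induction k with
  | zero => simp
  | succ k ih =>
    rw [ih, sum_range_succ, add_assoc, div_pow, div_pow]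
    congr 1
    field_simp
    ring

variable {ι κ : Type*}

def cauchyTaylorLeft (x : ι → K) (c : K) (k : ℕ) : Matrix ι (Fin k) K :=
  Matrix.of fun h i => (x h - c)⁻¹ ^ ((i : ℕ) + 1)

def cauchyTaylorRight (y : κ → K) (c : K) (k : ℕ) : Matrix (Fin k) κ K :=
  Matrix.of fun i j => (y j - c) ^ (i : ℕ)

lemma cauchyTaylorLeft_mul_cauchyTaylorRight_apply (x : ι → K) (y : κ → K) (c : K) (k : ℕ)
    (h : ι) (j : κ) :
    (cauchyTaylorLeft x c k * cauchyTaylorRight y c k) h j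
      = ∑ i ∈ range k, (y j - c) ^ i / (x h - c) ^ (i + 1) := by
  rw [Matrix.mul_apply, ← Fin.sum_univ_eq_sum_range]
  simp only [cauchyTaylorLeft, cauchyTaylorRight, Matrix.of_apply, inv_pow, div_eq_mul_inv,
    mul_comm]

lemma inv_sub_sub_cauchyTaylor_apply {x : ι → K} {y : κ → K} {c : K} {h : ι} {j : κ}
    (hxc : x h - c ≠ 0) (hxy : x h - y j ≠ 0) (k : ℕ) :
    (x h - y j)⁻¹ - (cauchyTaylorLeft x c k * cauchyTaylorRight y c k) h j
      = ((y j - c) / (x h - c)) ^ k / (x h - y j) := by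
  rw [cauchyTaylorLeft_mul_cauchyTaylorRight_apply, inv_sub_eq_sum_add hxc hxy k,
    add_sub_cancel_left]

end Taylor

lemma mul_le_norm_sub_of_separated {E : Type*} [SeminormedAddCommGroup E] {x y c : E}
    {θ δ : ℝ} (hθ : θ ≤ 1) (hδ : δ ≤ ‖x - c‖) (hsep : ‖y - c‖ ≤ θ * ‖x - c‖) :
    (1 - θ) * δ ≤ ‖x - y‖ := by
  have := norm_sub_norm_le (x - c) (y - c)
  rw [sub_sub_sub_cancel_right] at this
  nlinarith

lemma norm_taylor_remainder_le {K : Type*} [NormedField K] {x y c : K} {θ δ : ℝ} (hθ : θ < 1)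
    (hδ : 0 < δ) (hδx : δ ≤ ‖x - c‖) (hsep : ‖y - c‖ ≤ θ * ‖x - c‖) (k : ℕ) :
    ‖((y - c) / (x - c)) ^ k / (x - y)‖ ≤ θ ^ k / ((1 - θ) * δ) := by
  have hx : 0 < ‖x - c‖ := hδ.trans_le hδx
  have hθ0 : 0 ≤ θ := nonneg_of_mul_nonneg_left ((norm_nonneg _).trans hsep) hx
  have hratio : ‖(y - c) / (x - c)‖ ≤ θ := by rw [norm_div, div_le_iff₀ hx]; exact hsep
  have hxy := mul_le_norm_sub_of_separated hθ.le hδx hsep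
  rw [norm_div, norm_pow]
  gcongr

/-- Singular value bound for `(θ,c)`-separated Cauchy matrices: if
`|y_j - c| ≤ θ |x_h - c|` for all `h, j` and `δ = min_h |c - x_h| > 0`, then for every `k`
there is a rank-`k` factorization `U Vᴴ` with
`‖C - U Vᴴ‖₂ ≤ θ^k √(mn) / ((1-θ) δ)` for the Cauchy matrix `C_{hj} = (x_h - y_j)⁻¹`. -/
theorem stmt_13 (m n : ℕ) (hm : 0 < m) (x : Fin m → ℂ) (y : Fin n → ℂ)
    (θ : ℝ) (hθ0 : 0 < θ) (hθ1 : θ < 1) (c : ℂ)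
    (hsep : ∀ (h : Fin m) (j : Fin n), ‖y j - c‖ ≤ θ * ‖x h - c‖)
    (δ : ℝ) (hδ : δ = Finset.univ.inf' (Finset.univ_nonempty_iff.mpr ⟨⟨0, hm⟩⟩)
      (fun h : Fin m => ‖c - x h‖))
    (hδpos : 0 < δ)
    (C : Matrix (Fin m) (Fin n) ℂ) (hC : ∀ h j, C h j = (x h - y j)⁻¹) (k : ℕ) :
    ∃ (U : Matrix (Fin m) (Fin k) ℂ) (V : Matrix (Fin n) (Fin k) ℂ),
      ‖C - U * Vᴴ‖ ≤ θ ^ k * Real.sqrt (m * n) / ((1 - θ) * δ) := by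
  have hδx : ∀ h, δ ≤ ‖x h - c‖ := fun h => by
    rw [norm_sub_rev, hδ]; exact inf'_le _ (mem_univ h)
  refine ⟨cauchyTaylorLeft x c k, (cauchyTaylorRight y c k)ᴴ, ?_⟩
  rw [Matrix.conjTranspose_conjTranspose]
  have hentry : ∀ h j, ‖(C - cauchyTaylorLeft x c k * cauchyTaylorRight y c k) h j‖
      ≤ θ ^ k / ((1 - θ) * δ) := fun h j => by
    have hxc : x h - c ≠ 0 := norm_pos_iff.mp (hδpos.trans_le (hδx h))
    have hxy : x h - y j ≠ 0 := norm_pos_iff.mp <|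
      (mul_pos (sub_pos.2 hθ1) hδpos).trans_le
        (mul_le_norm_sub_of_separated hθ1.le (hδx h) (hsep h j))
    rw [Matrix.sub_apply, hC, inv_sub_sub_cauchyTaylor_apply hxc hxy]
    exact norm_taylor_remainder_le hθ1 hδpos (hδx h) (hsep h j) k
  calc _ ≤ √(m * n) * (θ ^ k / ((1 - θ) * δ)) := by
        simpa using Matrix.l2_opNorm_le_of_forall_norm_le _ (by bound) hentry
    _ = θ ^ k * √(m * n) / ((1 - θ) * δ) := by ring
end
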